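/- Suppose L is an unbounded operator on a Hilbert space H whose eigenvectors {z_k} form a (Schauder) basis of H with eigenvalues {λ_k} having no accumulation point in ℂ. If f ∈ H satisfies ‖Lⁿ f‖ ≤ K Cⁿ ‖f‖ for all n ≥ 0 and some constants K, C, then f lies in the span of finitely many z_k; specifically f ∈ span{z_k : |λ_k| ≤ C'} for some finite C'. -/

import Mathlib

/-!
Since `L` acts diagonally, `⟪z_j, Lⁿ f⟫ = λ_jⁿ ⟪z_j, f⟫`, so the bound on `‖Lⁿ f‖` gives
`|λ_j|ⁿ |⟪z_j, f⟫| ≤ K ‖f‖ Cⁿ` for every `n`. Hence `⟪z_j, f⟫ = 0` whenever `|λ_j| > |C|`.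
As `|λ_k| → ∞`, only finitely many `k` have `|λ_k| ≤ |C|`, and `f` minus its finite expansion
along those `z_k` is orthogonal to every `z_j`, hence to their dense span, hence zero.
-/

open Filter

open Submodule in
theorem eq_zero_of_forall_inner_eq_zero_of_dense_span {𝕜 E ι : Type*} [RCLike 𝕜]
    [NormedAddCommGroup E] [InnerProductSpace 𝕜 E] {v : ι → E}
    (hv : (span 𝕜 (Set.range v)).topologicalClosure = ⊤) {x : E}
    (h : ∀ i, inner 𝕜 (v i) x = 0) : x = 0 := by
  have hortho : span 𝕜 (Set.range v) ⟂ span 𝕜 {x} := by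
    rw [isOrtho_span]
    rintro _ ⟨i, rfl⟩ _ rfl
    exact h i
  have hx : x ∈ (span 𝕜 (Set.range v))ᗮ :=
    isOrtho_iff_le.mp hortho.symm (mem_span_singleton_self x)
  rwa [← orthogonal_closure, hv, top_orthogonal_eq_bot, Submodule.mem_bot] at hx

theorem Orthonormal.mem_span_image_of_inner_eq_zero {𝕜 E ι : Type*} [RCLike 𝕜]
    [NormedAddCommGroup E] [InnerProductSpace 𝕜 E] {v : ι → E} (hv : Orthonormal 𝕜 v)
    (hdense : (Submodule.span 𝕜 (Set.range v)).topologicalClosure = ⊤) {x : E} {s : Finset ι}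
    (h : ∀ i ∉ s, inner 𝕜 (v i) x = 0) : x ∈ Submodule.span 𝕜 (v '' s) := by
  classical
  have hx : x = ∑ i ∈ s, inner 𝕜 (v i) x • v i := by
    rw [← sub_eq_zero]
    refine eq_zero_of_forall_inner_eq_zero_of_dense_span hdense fun j => ?_
    rw [inner_sub_right]
    by_cases hj : j ∈ s
    · rw [hv.inner_right_sum _ hj, sub_self]
    · rw [h j hj, zero_sub, neg_eq_zero, inner_sum]
      refine Finset.sum_eq_zero fun i hi => ?_
      rw [inner_smul_right, hv.2 (ne_of_mem_of_not_mem hi hj).symm, mul_zero]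
  rw [hx]
  exact Submodule.sum_mem _ fun i hi =>
    Submodule.smul_mem _ _ (Submodule.subset_span (Set.mem_image_of_mem v hi))

theorem inner_eq_pow_mul_of_forall_inner_apply_eq {𝕜 E : Type*} [RCLike 𝕜]
    [NormedAddCommGroup E] [InnerProductSpace 𝕜 E] {D : Submodule 𝕜 E} {L : D →ₗ[𝕜] E}
    {v : E} {μ : 𝕜} (hv : ∀ x : D, inner 𝕜 v (L x) = μ * inner 𝕜 v (x : E))
    {g : ℕ → E} (hgD : ∀ n, g n ∈ D) (hgL : ∀ n, L ⟨g n, hgD n⟩ = g (n + 1)) (n : ℕ) :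
    inner 𝕜 v (g n) = μ ^ n * inner 𝕜 v (g 0) := by
  induction n with
  | zero => rw [pow_zero, one_mul]
  | succ n ih => rw [← hgL, hv, ih, pow_succ, mul_comm _ μ, mul_assoc]

theorem eq_zero_of_forall_pow_mul_le {a r c K : ℝ} (hcr : |c| < r) (ha : 0 ≤ a)
    (h : ∀ n : ℕ, r ^ n * a ≤ K * c ^ n) : a = 0 := by
  have hr : 0 < r := (abs_nonneg c).trans_lt hcr
  have hbound : ∀ n : ℕ, a ≤ K * (c / r) ^ n := fun n => by
    rw [div_pow, ← mul_div_assoc, le_div_iff₀ (pow_pos hr n), mul_comm]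
    exact h n
  have hlim : Tendsto (fun n : ℕ => K * (c / r) ^ n) atTop (nhds 0) := by
    have hq : |c / r| < 1 := by rwa [abs_div, abs_of_pos hr, div_lt_one hr]
    simpa using (tendsto_pow_atTop_nhds_zero_of_abs_lt_one hq).const_mul K
  exact le_antisymm (ge_of_tendsto' hlim hbound) ha

theorem stmt_11_general {H : Type*} [NormedAddCommGroup H] [InnerProductSpace ℂ H]
    (z : ℕ → H) (hON : Orthonormal ℂ z)
    (hcomp : (Submodule.span ℂ (Set.range z)).topologicalClosure = ⊤)
    (lam : ℕ → ℂ)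
    (htends : Tendsto (fun k => ‖lam k‖) atTop atTop)
    (D : Submodule ℂ H) (L : D →ₗ[ℂ] H)
    (hdiag : ∀ (x : D) (j : ℕ), @inner ℂ _ _ (z j) (L x) = lam j * @inner ℂ _ _ (z j) (x : H))
    (f : H) (K C : ℝ)
    (g : ℕ → H) (hg0 : g 0 = f) (hgD : ∀ n, g n ∈ D)
    (hgL : ∀ n, L ⟨g n, hgD n⟩ = g (n + 1))
    (hbound : ∀ n, ‖g n‖ ≤ K * C ^ n * ‖f‖) :
    ∃ C' : ℝ, f ∈ Submodule.span ℂ {x : H | ∃ k, ‖lam k‖ ≤ C' ∧ x = z k} := by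
  refine ⟨|C|, ?_⟩
  have hsmall : {k | ‖lam k‖ ≤ |C|}.Finite := by
    have hlarge := htends.eventually_gt_atTop |C|
    rw [← Nat.cofinite_eq_atTop, eventually_cofinite] at hlarge
    simpa only [not_lt] using hlarge
  have hcoeff : ∀ j, |C| < ‖lam j‖ → inner ℂ (z j) f = 0 := fun j hj =>
    norm_eq_zero.mp <| eq_zero_of_forall_pow_mul_le hj (norm_nonneg _) fun n => calc
      ‖lam j‖ ^ n * ‖inner ℂ (z j) f‖ = ‖inner ℂ (z j) (g n)‖ := by
        rw [inner_eq_pow_mul_of_forall_inner_apply_eq (hdiag · j) hgD hgL n, hg0, norm_mul,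
          norm_pow]
      _ ≤ ‖g n‖ := by simpa [hON.1 j] using norm_inner_le_norm (𝕜 := ℂ) (z j) (g n)
      _ ≤ K * ‖f‖ * C ^ n := (hbound n).trans_eq (by ring)
  refine Submodule.span_mono ?_ <| hON.mem_span_image_of_inner_eq_zero hcomp
    (s := hsmall.toFinset) fun j hj => hcoeff j (by simpa using hj)
  rintro _ ⟨k, hk, rfl⟩
  exact ⟨k, by simpa using hk, rfl⟩

/-- Suppose the eigenvectors `{z_k}` of a (possibly unbounded, closed) operator `L`,
diagonal in the orthonormal basis `{z_k}` with distinct eigenvalues `{λ_k}` satisfying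
`|λ_k| → ∞` (no accumulation points), form an orthonormal basis of `H`. If `f` is a bounded
analytic vector, i.e. `f ∈ ∩ₙ D(Lⁿ)` with `‖Lⁿ f‖ ≤ K Cⁿ ‖f‖` for all `n` (the iterates
`Lⁿ f` being witnessed by the chain `g`), then `f` lies in the span of finitely many `z_k`:
`f ∈ span{z_k : |λ_k| ≤ C'}` for some finite `C'`. -/
theorem stmt_11 {H : Type*} [NormedAddCommGroup H] [InnerProductSpace ℂ H] [CompleteSpace H]
    (z : ℕ → H) (hON : Orthonormal ℂ z)
    (hcomp : (Submodule.span ℂ (Set.range z)).topologicalClosure = ⊤)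
    (lam : ℕ → ℂ) (hinj : Function.Injective lam)
    (htends : Tendsto (fun k => ‖lam k‖) atTop atTop)
    (D : Submodule ℂ H) (L : D →ₗ[ℂ] H)
    (hclosed : IsClosed {p : H × H | ∃ x : D, p = ((x : H), L x)})
    (heig : ∀ k, ∃ hk : z k ∈ D, L ⟨z k, hk⟩ = lam k • z k)
    (hdiag : ∀ (x : D) (j : ℕ), @inner ℂ _ _ (z j) (L x) = lam j * @inner ℂ _ _ (z j) (x : H))
    (f : H) (K C : ℝ)
    (g : ℕ → H) (hg0 : g 0 = f) (hgD : ∀ n, g n ∈ D)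
    (hgL : ∀ n, L ⟨g n, hgD n⟩ = g (n + 1))
    (hbound : ∀ n, ‖g n‖ ≤ K * C ^ n * ‖f‖) :
    ∃ C' : ℝ, f ∈ Submodule.span ℂ {x : H | ∃ k, ‖lam k‖ ≤ C' ∧ x = z k} :=
  stmt_11_general z hON hcomp lam htends D L hdiag f K C g hg0 hgD hgL hbound
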